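/- arXiv:1812.02114 — 5 statements merged into one kernel-verified Lean document; each statement's English description precedes it below -/
import Mathlib

section
/- For p, q ≥ 1 and n ≥ 1, the two expressions C(n+p-1, p)·C(n+q-1, q) − C(n+p-2, p-1)·C(n+q-2, q-1) and (n-1)(n+p+q-1)/(pq) · C(n+p-2, p-1) · C(n+q-2, q-1) are equal, where C(a,b) denotes the binomial coefficient. -/
/-- The combinatorial identity underlying the dimension formula for
`H_{p,q}(S^{2n-1})`: for `p, q ≥ 1` and `n ≥ 1`,
`C(n+p-1,p)·C(n+q-1,q) − C(n+p-2,p-1)·C(n+q-2,q-1)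
  = (n-1)(n+p+q-1)/(pq) · C(n+p-2,p-1) · C(n+q-2,q-1)`. -/
theorem stmt2 (n p q : ℕ) (hn : 1 ≤ n) (hp : 1 ≤ p) (hq : 1 ≤ q) :
    ((n + p - 1).choose p * (n + q - 1).choose q : ℚ)
      - ((n + p - 2).choose (p - 1) * (n + q - 2).choose (q - 1) : ℚ)
    = ((n : ℚ) - 1) * ((n : ℚ) + p + q - 1) / ((p : ℚ) * q)
        * ((n + p - 2).choose (p - 1) : ℚ) * ((n + q - 2).choose (q - 1) : ℚ) := by
  obtain ⟨m, rfl⟩ : ∃ m, n = m + 1 := ⟨n - 1, by omega⟩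
  obtain ⟨a, rfl⟩ : ∃ a, p = a + 1 := ⟨p - 1, by omega⟩
  obtain ⟨b, rfl⟩ : ∃ b, q = b + 1 := ⟨q - 1, by omega⟩
  rw [show m + 1 + (a + 1) - 1 = m + a + 1 from by omega,
      show m + 1 + (a + 1) - 2 = m + a from by omega,
      show m + 1 + (b + 1) - 1 = m + b + 1 from by omega,
      show m + 1 + (b + 1) - 2 = m + b from by omega,
      show a + 1 - 1 = a from by omega,
      show b + 1 - 1 = b from by omega]
  have hA' : ((m : ℚ) + a + 1) * ((m + a).choose a : ℚ)
      = ((m + a + 1).choose (a + 1) : ℚ) * ((a : ℚ) + 1) := by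
    exact_mod_cast congrArg (Nat.cast : ℕ → ℚ) (Nat.add_one_mul_choose_eq (m + a) a)
  have hB' : ((m : ℚ) + b + 1) * ((m + b).choose b : ℚ)
      = ((m + b + 1).choose (b + 1) : ℚ) * ((b : ℚ) + 1) := by
    exact_mod_cast congrArg (Nat.cast : ℕ → ℚ) (Nat.add_one_mul_choose_eq (m + b) b)
  have ha : ((a : ℚ) + 1) ≠ 0 := by positivity
  have hb : ((b : ℚ) + 1) ≠ 0 := by positivity
  set X : ℚ := ((m + a + 1).choose (a + 1) : ℚ)
  set Y : ℚ := ((m + b + 1).choose (b + 1) : ℚ)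
  set A : ℚ := ((m + a).choose a : ℚ)
  set B : ℚ := ((m + b).choose b : ℚ)
  push_cast
  field_simp
  linear_combination (-((b:ℚ)+1) * Y) * hA' + (-((m:ℚ) + a + 1) * A) * hB'
end

section
/- Fix n ≥ 2 and define N(m) = ∑ d(p,q) over all pairs of positive integers (p,q) with 2q(p+n−1) ≤ m, where d(p,q) = (n−1)(n+p+q−1)/(pq)·C(n+p−2,p−1)·C(n+q−2,q−1). Then there exists c > 0 such that N(m) ≥ c·m^n for all sufficiently large m. -/
lemma keylem6 (n p : ℕ) (hn : 2 ≤ n) (hp : 1 ≤ p) :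
    p ^ (n-1) ≤ (n-1).factorial * (n + p - 2).choose (p - 1) := by
  have h1 : (n + p - 2).choose (p - 1) = (n + p - 2).choose (n - 1) := by
    apply Nat.choose_symm_of_eq_add; omega
  rw [h1]
  have h2 : (n + p - 2) = p + (n-1) - 1 := by omega
  rw [h2, ← Nat.ascFactorial_eq_factorial_mul_choose']
  exact Nat.pow_succ_le_ascFactorial p (n-1)

/-- Lower bound for the eigenvalue counting function of the Kohn Laplacian on
`L²(S^{2n-1})`: with `N(m) = ∑ d(p,q)` over positive integer pairs `(p,q)` with
`2q(p+n-1) ≤ m`, where `d(p,q) = (n-1)(n+p+q-1)/(pq)·C(n+p-2,p-1)·C(n+q-2,q-1)`,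
there is `c > 0` with `N(m) ≥ c·m^n` for all large `m`. -/
theorem stmt6 (n : ℕ) (hn : 2 ≤ n) :
    ∃ c : ℚ, 0 < c ∧ ∃ M : ℕ, ∀ m : ℕ, M ≤ m →
      (∑ pq ∈ (Finset.Icc 1 m ×ˢ Finset.Icc 1 m).filter
          (fun pq => 2 * pq.2 * (pq.1 + n - 1) ≤ m),
        ((n : ℚ) - 1) * ((n : ℚ) + pq.1 + pq.2 - 1) / ((pq.1 : ℚ) * pq.2)
          * ((n + pq.1 - 2).choose (pq.1 - 1) : ℚ)
          * ((n + pq.2 - 2).choose (pq.2 - 1) : ℚ))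
        ≥ c * (m : ℚ) ^ n := by
  have hfac : (0:ℚ) < ((n-1).factorial : ℚ) := by
    exact_mod_cast (n-1).factorial_pos
  refine ⟨1 / (16^n * ((n-1).factorial : ℚ)), by positivity, 16 * n, ?_⟩
  intro m hm
  set k := m / 8 with hk
  have hk8 : 8 * k ≤ m := by omega
  have hk8' : m < 8 * (k + 1) := by omega
  set f : ℕ × ℕ → ℚ := fun pq =>
      ((n : ℚ) - 1) * ((n : ℚ) + pq.1 + pq.2 - 1) / ((pq.1 : ℚ) * pq.2)
        * ((n + pq.1 - 2).choose (pq.1 - 1) : ℚ)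
        * ((n + pq.2 - 2).choose (pq.2 - 1) : ℚ) with hf
  set T := (Finset.Icc 1 m ×ˢ Finset.Icc 1 m).filter
      (fun pq : ℕ × ℕ => 2 * pq.2 * (pq.1 + n - 1) ≤ m) with hT
  set S := (Finset.Icc (k+1) (2*k)).image (fun p => (p, 1)) with hS
  have hsub : S ⊆ T := by
    intro pq hpq
    simp only [hS, Finset.mem_image, Finset.mem_Icc] at hpq
    obtain ⟨p, hp, rfl⟩ := hpq
    simp only [hT, Finset.mem_filter, Finset.mem_product, Finset.mem_Icc]
    omega
  -- nonnegativity of all terms in T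
  have hnonneg : ∀ pq ∈ T, 0 ≤ f pq := by
    intro pq hpq
    simp only [hT, Finset.mem_filter, Finset.mem_product, Finset.mem_Icc] at hpq
    have h1 : (1:ℚ) ≤ pq.1 := by exact_mod_cast hpq.1.1.1
    have h2 : (1:ℚ) ≤ pq.2 := by exact_mod_cast hpq.1.2.1
    have hn' : (2:ℚ) ≤ n := by exact_mod_cast hn
    have : (0:ℚ) ≤ ((n : ℚ) - 1) * ((n : ℚ) + pq.1 + pq.2 - 1) / ((pq.1 : ℚ) * pq.2) := by
      apply div_nonneg
      · nlinarith
      · nlinarith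
    simp only [hf]
    positivity
  have step1 : ∑ pq ∈ S, f pq ≤ ∑ pq ∈ T, f pq := by
    apply Finset.sum_le_sum_of_subset_of_nonneg hsub
    intro pq hpq _; exact hnonneg pq hpq
  have step2 : ∑ pq ∈ S, f pq = ∑ p ∈ Finset.Icc (k+1) (2*k), f (p, 1) := by
    rw [hS, Finset.sum_image]
    intro a _ b _ hab
    exact (Prod.mk.injEq _ _ _ _ ▸ hab).1
  -- each term bound
  have hterm : ∀ p ∈ Finset.Icc (k+1) (2*k),
      ((k+1 : ℕ) : ℚ) ^ (n-1) / ((n-1).factorial : ℚ) ≤ f (p, 1) := by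
    intro p hp
    simp only [Finset.mem_Icc] at hp
    have hp1 : 1 ≤ p := by omega
    have hpQ : (1:ℚ) ≤ (p:ℚ) := by exact_mod_cast hp1
    have hnQ : (2:ℚ) ≤ (n:ℚ) := by exact_mod_cast hn
    have hA : (1:ℚ) ≤ ((n : ℚ) - 1) * ((n : ℚ) + p + 1 - 1) / (p : ℚ) := by
      rw [le_div_iff₀ (by linarith)]
      nlinarith
    have hC2 : ((n + 1 - 2).choose (1 - 1) : ℚ) = 1 := by norm_num
    have hC1 : ((k+1 : ℕ) : ℚ) ^ (n-1) / ((n-1).factorial : ℚ)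
        ≤ ((n + p - 2).choose (p - 1) : ℚ) := by
      rw [div_le_iff₀ hfac]
      have := keylem6 n p hn hp1
      have hle : (k+1) ^ (n-1) ≤ (n-1).factorial * (n + p - 2).choose (p - 1) := by
        calc (k+1) ^ (n-1) ≤ p ^ (n-1) := Nat.pow_le_pow_left hp.1 _
          _ ≤ _ := this
      calc ((k+1 : ℕ) : ℚ) ^ (n-1) = (((k+1) ^ (n-1) : ℕ) : ℚ) := by push_cast; ring
        _ ≤ (((n-1).factorial * (n + p - 2).choose (p - 1) : ℕ) : ℚ) := by exact_mod_cast hle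
        _ = _ := by push_cast; ring
    have hC1nn : (0:ℚ) ≤ ((k+1 : ℕ) : ℚ) ^ (n-1) / ((n-1).factorial : ℚ) := by positivity
    simp only [hf, Nat.cast_one, hC2, mul_one]
    calc ((k+1 : ℕ) : ℚ) ^ (n-1) / ((n-1).factorial : ℚ)
        = 1 * (((k+1 : ℕ) : ℚ) ^ (n-1) / ((n-1).factorial : ℚ)) := by ring
      _ ≤ ((n : ℚ) - 1) * ((n : ℚ) + p + 1 - 1) / (p : ℚ)
            * ((n + p - 2).choose (p - 1) : ℚ) :=
          mul_le_mul hA hC1 hC1nn (by linarith)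
  have step3 : (k : ℚ) * (((k+1 : ℕ) : ℚ) ^ (n-1) / ((n-1).factorial : ℚ))
      ≤ ∑ p ∈ Finset.Icc (k+1) (2*k), f (p, 1) := by
    have hcard : (Finset.Icc (k+1) (2*k)).card = k := by
      rw [Nat.card_Icc]; omega
    calc (k : ℚ) * (((k+1 : ℕ) : ℚ) ^ (n-1) / ((n-1).factorial : ℚ))
        = (Finset.Icc (k+1) (2*k)).card
            * (((k+1 : ℕ) : ℚ) ^ (n-1) / ((n-1).factorial : ℚ)) := by rw [hcard]
      _ = ∑ _p ∈ Finset.Icc (k+1) (2*k),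
            ((k+1 : ℕ) : ℚ) ^ (n-1) / ((n-1).factorial : ℚ) := by
          rw [Finset.sum_const, nsmul_eq_mul]
      _ ≤ _ := Finset.sum_le_sum hterm
  -- relate k to m
  have hm16 : (m : ℚ) ≤ 16 * (k : ℚ) := by
    have : m ≤ 16 * k := by omega
    exact_mod_cast this
  have hmQ : (0:ℚ) ≤ (m:ℚ) := by positivity
  have hfinal : 1 / (16^n * ((n-1).factorial : ℚ)) * (m : ℚ) ^ n
      ≤ (k : ℚ) * (((k+1 : ℕ) : ℚ) ^ (n-1) / ((n-1).factorial : ℚ)) := by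
    have hkn : (m : ℚ) ^ n ≤ 16^n * ((k:ℚ) * ((k+1 : ℕ) : ℚ) ^ (n-1)) := by
      have h1 : (m : ℚ) ^ n ≤ (16 * (k:ℚ)) ^ n := pow_le_pow_left₀ hmQ hm16 n
      have h2 : ((k:ℚ)) ^ n ≤ (k:ℚ) * ((k+1 : ℕ) : ℚ) ^ (n-1) := by
        have hkk : (k:ℚ) ^ n = (k:ℚ) * (k:ℚ) ^ (n-1) := by
          rw [← pow_succ']
          congr 1
          omega
        rw [hkk]
        apply mul_le_mul_of_nonneg_left _ (by positivity)
        apply pow_le_pow_left₀ (by positivity)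
        push_cast; linarith
      calc (m : ℚ) ^ n ≤ (16 * (k:ℚ)) ^ n := h1
        _ = 16^n * (k:ℚ)^n := by rw [mul_pow]
        _ ≤ 16^n * ((k:ℚ) * ((k+1 : ℕ) : ℚ) ^ (n-1)) := by
            apply mul_le_mul_of_nonneg_left h2 (by positivity)
    have heq : 1 / (16^n * ((n-1).factorial : ℚ)) * (m : ℚ) ^ n
        = (m : ℚ) ^ n / (16^n * ((n-1).factorial : ℚ)) := by ring
    rw [heq, div_le_iff₀ (by positivity)]
    calc (m:ℚ)^n ≤ 16^n * ((k:ℚ) * ((k+1 : ℕ) : ℚ) ^ (n-1)) := hkn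
      _ = (k : ℚ) * (((k+1 : ℕ) : ℚ) ^ (n-1) / ((n-1).factorial : ℚ))
            * (16 ^ n * ((n-1).factorial : ℚ)) := by field_simp
  calc ∑ pq ∈ T, f pq ≥ ∑ pq ∈ S, f pq := step1
    _ = ∑ p ∈ Finset.Icc (k+1) (2*k), f (p, 1) := step2
    _ ≥ (k : ℚ) * (((k+1 : ℕ) : ℚ) ^ (n-1) / ((n-1).factorial : ℚ)) := step3
    _ ≥ 1 / (16^n * ((n-1).factorial : ℚ)) * (m : ℚ) ^ n := hfinal
end

section
/- Fix n ≥ 2 and define N(m) = ∑ d(p,q) over all pairs of positive integers (p,q) with 2q(p+n−1) ≤ m, where d(p,q) = (n−1)(n+p+q−1)/(pq)·C(n+p−2,p−1)·C(n+q−2,q−1). Then there exists c > 0 such that N(m) ≤ c·m^n for all m ≥ 1. -/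
/-!
Since `C(n+p-2, p-1) = C(n+p-2, n-1) ≤ ((n-1)p)^(n-1)` and `n+p+q-1 ≤ n(p+q)`, each multiplicity
satisfies `d(p,q) ≤ K (p+q) (pq)^(n-2)` with `K = n(n-1)^(2n-1)`. Every counted pair has
`pq ≤ 2q(p+n-1) ≤ m`, so `(pq)^(n-2) ≤ m^(n-2)`, and `∑_{pq ≤ m} (p+q) ≤ 2m²` because for each `p`
at most `m/p` values of `q` are admissible. Together, `N(m) ≤ 2K m^n`.
-/

open Finset

def kohnMultiplicity (n p q : ℕ) : ℚ :=
  ((n : ℚ) - 1) * ((n : ℚ) + p + q - 1) / ((p : ℚ) * q)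
    * ((n + p - 2).choose (p - 1) : ℚ) * ((n + q - 2).choose (q - 1) : ℚ)

def hyperbolaPairs (m : ℕ) : Finset (ℕ × ℕ) :=
  (Icc 1 m ×ˢ Icc 1 m).filter fun pq => pq.1 * pq.2 ≤ m

lemma Nat.choose_add_le_mul_succ_pow (a b : ℕ) : (a + b).choose a ≤ (a * (b + 1)) ^ a := by
  rcases Nat.eq_zero_or_pos a with rfl | ha
  · simp
  · calc (a + b).choose a ≤ (a + b) ^ a := Nat.choose_le_pow _ _
      _ ≤ (a * (b + 1)) ^ a := Nat.pow_le_pow_left (by nlinarith) _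

lemma kohnMultiplicity_le {n p q : ℕ} (hn : 2 ≤ n) (hp : 1 ≤ p) (hq : 1 ≤ q) :
    kohnMultiplicity n p q
      ≤ n * (n - 1) ^ (2 * n - 1) * (p + q) * ((p : ℚ) * q) ^ (n - 2) := by
  obtain ⟨k, rfl⟩ := Nat.exists_eq_add_of_le' hn
  obtain ⟨p, rfl⟩ := Nat.exists_eq_add_of_le' hp
  obtain ⟨q, rfl⟩ := Nat.exists_eq_add_of_le' hq
  have choose_le (r : ℕ) : ((k + 2 + (r + 1) - 2).choose (r + 1 - 1) : ℚ)
      ≤ ((k + 1) * (r + 1)) ^ (k + 1) := by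
    rw [show k + 2 + (r + 1) - 2 = k + 1 + r by omega, Nat.add_sub_cancel,
      ← Nat.choose_symm_add]
    exact_mod_cast Nat.choose_add_le_mul_succ_pow (k + 1) r
  have hpq : (0 : ℚ) < (p + 1) * (q + 1) := by positivity
  simp only [kohnMultiplicity, Nat.cast_add, Nat.cast_one, Nat.cast_ofNat,
    show 2 * (k + 2) - 1 = 2 * k + 3 by omega, Nat.add_sub_cancel]
  rw [div_mul_eq_mul_div, div_mul_eq_mul_div, div_le_iff₀ hpq,
    show (k : ℚ) + 2 - 1 = k + 1 by ring]
  calc ((k : ℚ) + 1) * (k + 2 + (p + 1) + (q + 1) - 1)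
        * ((k + 2 + (p + 1) - 2).choose (p + 1 - 1) : ℕ)
        * ((k + 2 + (q + 1) - 2).choose (q + 1 - 1) : ℕ)
      ≤ (k + 1) * ((k + 2) * ((p + 1) + (q + 1)))
        * ((k + 1) * (p + 1)) ^ (k + 1) * ((k + 1) * (q + 1)) ^ (k + 1) := by
        gcongr
        · nlinarith
        · exact choose_le p
        · exact choose_le q
    _ = _ := by simp only [mul_pow]; ring

lemma mul_card_filter_mul_le (a m : ℕ) : a * #{b ∈ Icc 1 m | a * b ≤ m} ≤ m := by
  rcases Nat.eq_zero_or_pos a with rfl | ha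
  · simp
  · have hsub : {b ∈ Icc 1 m | a * b ≤ m} ⊆ Icc 1 (m / a) := fun b hb => by
      simp only [mem_filter, mem_Icc] at hb ⊢
      exact ⟨hb.1.1, (Nat.le_div_iff_mul_le ha).2 (by linarith)⟩
    calc a * #{b ∈ Icc 1 m | a * b ≤ m} ≤ a * (m / a) := by
          gcongr; simpa using card_le_card hsub
      _ ≤ m := Nat.mul_div_le m a

lemma sum_add_le_of_hyperbolaPairs (m : ℕ) :
    ∑ pq ∈ hyperbolaPairs m, (pq.1 + pq.2) ≤ 2 * m ^ 2 := by
  have row_le (a : ℕ) : ∑ b ∈ Icc 1 m, (if a * b ≤ m then a else 0) ≤ m := by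
    rw [← sum_filter, sum_const, smul_eq_mul, mul_comm]
    exact mul_card_filter_mul_le a m
  rw [sum_add_distrib, two_mul, sq, hyperbolaPairs, sum_filter, sum_filter]
  gcongr
  · rw [sum_product]
    simpa using sum_le_sum fun a (_ : a ∈ Icc 1 m) => row_le a
  · rw [sum_product_right]
    have col_le (b : ℕ) : ∑ a ∈ Icc 1 m, (if a * b ≤ m then b else 0) ≤ m := by
      simpa only [mul_comm] using row_le b
    simpa using sum_le_sum fun b (_ : b ∈ Icc 1 m) => col_le b

lemma filter_kohn_subset_hyperbolaPairs {n : ℕ} (hn : 1 ≤ n) (m : ℕ) :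
    (Icc 1 m ×ˢ Icc 1 m).filter (fun pq => 2 * pq.2 * (pq.1 + n - 1) ≤ m)
      ⊆ hyperbolaPairs m := by
  intro pq hpq
  simp only [hyperbolaPairs, mem_filter] at hpq ⊢
  refine ⟨hpq.1, le_trans ?_ hpq.2⟩
  calc pq.1 * pq.2 ≤ (pq.1 + n - 1) * (2 * pq.2) := by gcongr <;> omega
    _ = 2 * pq.2 * (pq.1 + n - 1) := mul_comm _ _

lemma kohnMultiplicity_le_of_mem_hyperbolaPairs {n m : ℕ} (hn : 2 ≤ n) {pq : ℕ × ℕ}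
    (hpq : pq ∈ hyperbolaPairs m) :
    kohnMultiplicity n pq.1 pq.2
      ≤ n * (n - 1) ^ (2 * n - 1) * (m : ℚ) ^ (n - 2) * (pq.1 + pq.2) := by
  simp only [hyperbolaPairs, mem_filter, mem_product, mem_Icc] at hpq
  obtain ⟨⟨⟨hp, -⟩, hq, -⟩, hmul⟩ := hpq
  have hn' : (0 : ℚ) ≤ n - 1 := sub_nonneg.2 (by exact_mod_cast (by omega : 1 ≤ n))
  calc kohnMultiplicity n pq.1 pq.2
      ≤ n * (n - 1) ^ (2 * n - 1) * (pq.1 + pq.2) * ((pq.1 : ℚ) * pq.2) ^ (n - 2) :=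
        kohnMultiplicity_le hn hp hq
    _ ≤ n * (n - 1) ^ (2 * n - 1) * (pq.1 + pq.2) * (m : ℚ) ^ (n - 2) := by
        gcongr
        exact_mod_cast hmul
    _ = _ := by ring

/-- Upper bound for the eigenvalue counting function of the Kohn Laplacian on
`L²(S^{2n-1})`: with `N(m) = ∑ d(p,q)` over positive integer pairs `(p,q)` with
`2q(p+n-1) ≤ m`, where `d(p,q) = (n-1)(n+p+q-1)/(pq)·C(n+p-2,p-1)·C(n+q-2,q-1)`,
there is `c > 0` with `N(m) ≤ c·m^n` for all `m ≥ 1`. -/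
theorem stmt7 (n : ℕ) (hn : 2 ≤ n) :
    ∃ c : ℚ, 0 < c ∧ ∀ m : ℕ, 1 ≤ m →
      (∑ pq ∈ (Finset.Icc 1 m ×ˢ Finset.Icc 1 m).filter
          (fun pq => 2 * pq.2 * (pq.1 + n - 1) ≤ m),
        ((n : ℚ) - 1) * ((n : ℚ) + pq.1 + pq.2 - 1) / ((pq.1 : ℚ) * pq.2)
          * ((n + pq.1 - 2).choose (pq.1 - 1) : ℚ)
          * ((n + pq.2 - 2).choose (pq.2 - 1) : ℚ))
        ≤ c * (m : ℚ) ^ n := by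
  set K : ℚ := n * (n - 1) ^ (2 * n - 1)
  have hK : 0 < K := by
    have : (1 : ℚ) < n := by exact_mod_cast hn
    exact mul_pos (by linarith) (pow_pos (by linarith) _)
  refine ⟨2 * K, by positivity, fun m _ => ?_⟩
  have hsub := filter_kohn_subset_hyperbolaPairs (by omega : 1 ≤ n) m
  calc _ ≤ ∑ pq ∈ (Icc 1 m ×ˢ Icc 1 m).filter (fun pq => 2 * pq.2 * (pq.1 + n - 1) ≤ m),
          K * (m : ℚ) ^ (n - 2) * (pq.1 + pq.2) :=
        sum_le_sum fun pq h => kohnMultiplicity_le_of_mem_hyperbolaPairs hn (hsub h)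
    _ ≤ ∑ pq ∈ hyperbolaPairs m, K * (m : ℚ) ^ (n - 2) * (pq.1 + pq.2) :=
        sum_le_sum_of_subset_of_nonneg hsub fun _ _ _ => by positivity
    _ = K * (m : ℚ) ^ (n - 2) * ((∑ pq ∈ hyperbolaPairs m, (pq.1 + pq.2) : ℕ) : ℚ) := by
        push_cast; rw [mul_sum]
    _ ≤ K * (m : ℚ) ^ (n - 2) * (2 * (m : ℚ) ^ 2) := by
        gcongr; exact_mod_cast sum_add_le_of_hyperbolaPairs m
    _ = 2 * K * (m : ℚ) ^ n := by
        rw [← pow_sub_mul_pow (m : ℚ) hn]; ring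
end

section
/- Let n ≥ 2 and let p = (p₁,...,pₙ), q = (q₁,...,qₙ) be tuples of non-negative integers such that for each k, p_k = 0 or q_k = 0. Let f be the monomial ∏_k z_k^{p_k} z̄_k^{q_k}, and define M_b = −∑_{k=2}^n (z̄₁ ∂/∂z_k − z̄_k ∂/∂z₁)(z₁ ∂/∂z̄_k − z_k ∂/∂z̄₁). Then M_b f = (p₁ ∑_{k=2}^n q_k + q₁ ∑_{k=2}^n p_k + (n−1)q₁ + ∑_{k=2}^n q_k) · f. -/
open MvPolynomial
lemma Xmul {σ : Type*} (j : σ) (s : σ →₀ ℕ) (a : ℂ) :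
    X j * monomial s a = monomial (Finsupp.single j 1 + s) a := by
  rw [monomial_single_add, pow_one]

lemma fixExp {σ : Type*} (D : σ →₀ ℕ) (w : σ) (c : ℕ) :
    (monomial (Finsupp.single w 1 + (D - Finsupp.single w 1)) ((D w * c : ℕ) : ℂ))
      = monomial D ((D w * c : ℕ) : ℂ) := by
  rcases Nat.eq_zero_or_pos (D w) with h | h
  · simp [h]
  · rw [add_tsub_cancel_of_le (Finsupp.single_le_iff.mpr h)]

lemma key {σ : Type*} [DecidableEq σ] (z1 zk w1 wk : σ) (D : σ →₀ ℕ)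
    (hz : z1 ≠ zk) (hw : w1 ≠ wk)
    (h11 : z1 ≠ w1) (h1k : z1 ≠ wk) (hk1 : zk ≠ w1) (hkk : zk ≠ wk)
    (h1 : D z1 * D w1 = 0) (hk : D zk * D wk = 0) :
    -(X w1 * pderiv zk (X z1 * pderiv wk (monomial D (1:ℂ)) - X zk * pderiv w1 (monomial D 1))
      - X wk * pderiv z1 (X z1 * pderiv wk (monomial D (1:ℂ)) - X zk * pderiv w1 (monomial D 1)))
    = (D w1 * (D zk + 1) + D wk * (D z1 + 1)) • monomial D (1:ℂ) := by
  have hA : X z1 * pderiv wk (monomial D (1:ℂ)) - X zk * pderiv w1 (monomial D 1)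
      = monomial (Finsupp.single z1 1 + (D - Finsupp.single wk 1)) (D wk : ℂ)
        - monomial (Finsupp.single zk 1 + (D - Finsupp.single w1 1)) (D w1 : ℂ) := by
    simp [pderiv_monomial, Xmul]
  rw [hA]
  simp only [map_sub, pderiv_monomial, mul_sub, Xmul]
  have e1 : ((Finsupp.single z1 1 + (D - Finsupp.single wk 1)) : _ →₀ ℕ) zk = D zk := by
    simp [Finsupp.single_apply, hz, Ne.symm hkk, Finsupp.tsub_apply]
  have e2 : ((Finsupp.single zk 1 + (D - Finsupp.single w1 1)) : _ →₀ ℕ) zk = 1 + D zk := by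
    simp [Finsupp.single_apply, Ne.symm hk1, Finsupp.tsub_apply]
  have e3 : ((Finsupp.single z1 1 + (D - Finsupp.single wk 1)) : _ →₀ ℕ) z1 = 1 + D z1 := by
    simp [Finsupp.single_apply, Ne.symm h1k, Finsupp.tsub_apply]
  have e4 : ((Finsupp.single zk 1 + (D - Finsupp.single w1 1)) : _ →₀ ℕ) z1 = D z1 := by
    simp [Finsupp.single_apply, hz.symm, Ne.symm h11, Finsupp.tsub_apply]
  rw [e1, e2, e3, e4]
  have x2 : (Finsupp.single zk 1 + (D - Finsupp.single w1 1)) - Finsupp.single zk 1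
      = D - Finsupp.single w1 1 := add_tsub_cancel_left _ _
  have x3 : (Finsupp.single z1 1 + (D - Finsupp.single wk 1)) - Finsupp.single z1 1
      = D - Finsupp.single wk 1 := add_tsub_cancel_left _ _
  rw [x2, x3]
  have c1 : (D wk : ℂ) * (D zk : ℕ) = 0 := by
    push_cast; rw [mul_comm]; exact_mod_cast congrArg (Nat.cast : ℕ → ℂ) hk
  have c4 : (D w1 : ℂ) * (D z1 : ℕ) = 0 := by
    push_cast; rw [mul_comm]; exact_mod_cast congrArg (Nat.cast : ℕ → ℂ) h1
  rw [c1, c4]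
  simp only [monomial_zero, mul_zero, zero_sub, sub_zero, neg_sub, neg_neg]
  have m2 : (monomial (Finsupp.single w1 1 + (D - Finsupp.single w1 1))
        ((D w1 : ℂ) * ((1 + D zk : ℕ) : ℂ))) = monomial D ((D w1 * (D zk + 1) : ℕ) : ℂ) := by
    rw [show (D w1 : ℂ) * ((1 + D zk : ℕ) : ℂ) = ((D w1 * (D zk + 1) : ℕ) : ℂ) by push_cast; ring]
    exact fixExp D w1 _
  have m3 : (monomial (Finsupp.single wk 1 + (D - Finsupp.single wk 1))
        ((D wk : ℂ) * ((1 + D z1 : ℕ) : ℂ))) = monomial D ((D wk * (D z1 + 1) : ℕ) : ℂ) := by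
    rw [show (D wk : ℂ) * ((1 + D z1 : ℕ) : ℂ) = ((D wk * (D z1 + 1) : ℕ) : ℂ) by push_cast; ring]
    exact fixExp D wk _
  rw [m2, m3, sub_neg_eq_add, ← map_add, smul_monomial, nsmul_eq_mul, mul_one]
  congr 1
  push_cast
  ring

/-- Eigenvalue of the sum-of-squares operator `M_b = −∑_{k=2}^n M_{1k} M̄_{1k}`
(with `M_{1k} = z̄₁∂/∂z_k − z̄_k∂/∂z₁`, `M̄_{1k} = z₁∂/∂z̄_k − z_k∂/∂z̄₁`,
variables `z_k = X (Sum.inl k)`, `z̄_k = X (Sum.inr k)`, and the index `1` of the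
paper corresponding to `i0 = 0 : Fin n`) on the monomial `f = ∏ z_k^{p_k} z̄_k^{q_k}`,
assuming for each `k` that `p_k = 0` or `q_k = 0`:
`M_b f = (p₁ ∑_{k≥2} q_k + q₁ ∑_{k≥2} p_k + (n−1) q₁ + ∑_{k≥2} q_k) • f`. -/
theorem stmt11 (n : ℕ) (hn : 2 ≤ n) (p q : Fin n → ℕ)
    (hpq : ∀ k, p k = 0 ∨ q k = 0)
    (i0 : Fin n) (hi0 : (i0 : ℕ) = 0)
    (f : MvPolynomial (Fin n ⊕ Fin n) ℂ)
    (hf : f = ∏ k : Fin n, X (Sum.inl k) ^ p k * X (Sum.inr k) ^ q k) :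
    (∑ k ∈ Finset.univ.erase i0,
      -(X (Sum.inr i0) * pderiv (Sum.inl k)
          (X (Sum.inl i0) * pderiv (Sum.inr k) f - X (Sum.inl k) * pderiv (Sum.inr i0) f)
        - X (Sum.inr k) * pderiv (Sum.inl i0)
          (X (Sum.inl i0) * pderiv (Sum.inr k) f - X (Sum.inl k) * pderiv (Sum.inr i0) f)))
    = (p i0 * (∑ k ∈ Finset.univ.erase i0, q k)
        + q i0 * (∑ k ∈ Finset.univ.erase i0, p k)
        + (n - 1) * q i0
        + ∑ k ∈ Finset.univ.erase i0, q k) • f := by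
  set D : (Fin n ⊕ Fin n) →₀ ℕ := Finsupp.equivFunOnFinite.symm (Sum.elim p q) with hD
  have hDl : ∀ j, D (Sum.inl j) = p j := fun j => rfl
  have hDr : ∀ j, D (Sum.inr j) = q j := fun j => rfl
  have hfD : f = monomial D 1 := by
    rw [hf, monomial_eq, C_1, one_mul,
      Finsupp.prod_fintype _ _ (fun i => pow_zero _), Fintype.prod_sum_type,
      ← Finset.prod_mul_distrib]
    simp only [hDl, hDr]
  have hsum : (∑ k ∈ Finset.univ.erase i0,
      -(X (Sum.inr i0) * pderiv (Sum.inl k)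
          (X (Sum.inl i0) * pderiv (Sum.inr k) f - X (Sum.inl k) * pderiv (Sum.inr i0) f)
        - X (Sum.inr k) * pderiv (Sum.inl i0)
          (X (Sum.inl i0) * pderiv (Sum.inr k) f - X (Sum.inl k) * pderiv (Sum.inr i0) f)))
      = ∑ k ∈ Finset.univ.erase i0, (q i0 * (p k + 1) + q k * (p i0 + 1)) • f := by
    refine Finset.sum_congr rfl fun k hk => ?_
    have hki0 : k ≠ i0 := Finset.ne_of_mem_erase hk
    rw [hfD]
    have h1 : D (Sum.inl i0) * D (Sum.inr i0) = 0 := by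
      rw [hDl, hDr]; rcases hpq i0 with h | h <;> simp [h]
    have h2 : D (Sum.inl k) * D (Sum.inr k) = 0 := by
      rw [hDl, hDr]; rcases hpq k with h | h <;> simp [h]
    have := key (Sum.inl i0) (Sum.inl k) (Sum.inr i0) (Sum.inr k) D
      (by simp [hki0.symm]) (by simp [hki0.symm]) (by simp) (by simp) (by simp) (by simp)
      h1 h2
    rw [this, hDl, hDl, hDr, hDr]
  rw [hsum, ← Finset.sum_smul]
  congr 1
  have hcard : (Finset.univ.erase i0).card = n - 1 := by
    rw [Finset.card_erase_of_mem (Finset.mem_univ _), Finset.card_univ, Fintype.card_fin]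
  rw [Finset.sum_add_distrib]
  simp only [mul_add, mul_one, add_mul, one_mul]
  rw [Finset.sum_add_distrib, Finset.sum_add_distrib, ← Finset.mul_sum,
    Finset.sum_const, ← Finset.sum_mul, smul_eq_mul, hcard]
  ring
end

section
/- Let k ≥ 2 be even and t real with |t| < 1. The maximum eigenvalue λ_k of the real symmetric k×k tridiagonal matrix B with diagonal d_j = 4j(k−j)+t²(2j−1)(2k+1−2j) and off-diagonals c_j = |t|√(4j(2j+1)(k−j)(2k−1−2j)) satisfies k² ≤ λ_k ≤ C k² for some constant C independent of k, i.e., λ_k = Θ(k²). -/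
/-!
The matrix is real symmetric, so by the spectral theorem each diagonal entry is a convex
combination of its eigenvalues and hence at most the largest one; at the middle index `j = k/2`
the diagonal entry is `k² + t²(k² - 1) ≥ k²`. Conversely, by Gershgorin every eigenvalue is at
most some diagonal entry plus the two off-diagonal entries of its row, and for `|t| ≤ 1` AM-GM
bounds these by `2k²` and `k²` respectively, so `λ ≤ 4k²`.
-/

open Matrix

theorem Matrix.IsHermitian.diag_le_of_mem_upperBounds {n : Type*} [Fintype n] [DecidableEq n]
    {A : Matrix n n ℝ} (hA : A.IsHermitian) {lam : ℝ}
    (hlam : lam ∈ upperBounds {μ | ∃ v : n → ℝ, v ≠ 0 ∧ A *ᵥ v = μ • v}) (i : n) :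
    A i i ≤ lam := by
  have heig (j : n) : hA.eigenvalues j ≤ lam :=
    hlam ⟨_, (WithLp.ofLp_eq_zero 2).ne.2 (hA.eigenvectorBasis.orthonormal.ne_zero j),
      hA.mulVec_eigenvectorBasis j⟩
  set U : Matrix n n ℝ := (hA.eigenvectorUnitary : Matrix n n ℝ)
  have hUU : ∑ j, U i j * U i j = 1 := by
    simpa [mul_apply, U] using
      congrFun (congrFun (Unitary.coe_mul_star_self hA.eigenvectorUnitary) i) i
  calc A i i = ∑ j, hA.eigenvalues j * (U i j * U i j) := by
        conv_lhs => rw [hA.spectral_theorem]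
        rw [Unitary.conjStarAlgAut_apply, mul_apply]
        exact Finset.sum_congr rfl fun j _ => by simp [U, mul_diagonal]; ring
    _ ≤ ∑ j, lam * (U i j * U i j) :=
        Finset.sum_le_sum fun j _ => mul_le_mul_of_nonneg_right (heig j) (mul_self_nonneg _)
    _ = lam := by rw [← Finset.mul_sum, hUU, mul_one]

theorem exists_le_diag_add_sum_abs_of_eigenvector {n : Type*} [Fintype n] [DecidableEq n]
    {A : Matrix n n ℝ} {μ : ℝ} {v : n → ℝ} (hv : v ≠ 0) (hAv : A *ᵥ v = μ • v) :
    ∃ i, μ ≤ A i i + ∑ j ∈ Finset.univ.erase i, |A i j| := by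
  have hμ : Module.End.HasEigenvalue (toLin' A) μ :=
    Module.End.hasEigenvalue_of_hasEigenvector ⟨Module.End.mem_eigenspace_iff.2 (by simpa), hv⟩
  obtain ⟨i, hi⟩ := eigenvalue_mem_ball hμ
  rw [Metric.mem_closedBall, Real.dist_eq] at hi
  simp only [Real.norm_eq_abs] at hi
  exact ⟨i, by linarith [(abs_sub_le_iff.1 hi).1]⟩

theorem Finset.sum_ite_le_of_subsingleton {ι : Type*} (s : Finset ι) {p : ι → Prop}
    [DecidablePred p] (hp : ∀ x y, p x → p y → x = y) {a : ℝ} (ha : 0 ≤ a) :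
    ∑ i ∈ s, (if p i then a else 0) ≤ a := by
  rw [Finset.sum_ite, Finset.sum_const_zero, add_zero, Finset.sum_const, nsmul_eq_mul]
  refine mul_le_of_le_one_left ha ?_
  exact_mod_cast Finset.card_le_one.2 fun x hx y hy =>
    hp x y (Finset.mem_filter.1 hx).2 (Finset.mem_filter.1 hy).2

/-- Indexed from `1` as in the paper: diagonal `d 1, …, d k`, off-diagonal `c 1, …, c (k - 1)`. -/
def symmTridiag (k : ℕ) (d c : ℝ → ℝ) : Matrix (Fin k) (Fin k) ℝ :=
  of fun i j =>
    if i = j then d ((i : ℕ) + 1)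
    else if (j : ℕ) = (i : ℕ) + 1 then c ((i : ℕ) + 1)
    else if (i : ℕ) = (j : ℕ) + 1 then c ((j : ℕ) + 1)
    else 0

section symmTridiag

variable {k : ℕ} {d c : ℝ → ℝ}

theorem symmTridiag_apply_self (i : Fin k) : symmTridiag k d c i i = d ((i : ℕ) + 1) := by
  simp [symmTridiag]

theorem Fin.cast_add_one_mem_Icc (i : Fin k) : ((i : ℕ) : ℝ) + 1 ∈ Set.Icc (1 : ℝ) k :=
  ⟨by linarith [(Nat.cast_nonneg i : (0 : ℝ) ≤ i)], by exact_mod_cast i.isLt⟩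

theorem symmTridiag_isHermitian : (symmTridiag k d c).IsHermitian := by
  ext i j
  simp only [symmTridiag, conjTranspose_apply, of_apply, star_trivial]
  split_ifs <;> first | rfl | (subst_vars; rfl) | omega

theorem sum_abs_symmTridiag_erase_le {E : ℝ} (hE : 0 ≤ E)
    (hc : ∀ m ∈ Set.Icc (1 : ℝ) k, |c m| ≤ E) (i : Fin k) :
    ∑ j ∈ Finset.univ.erase i, |symmTridiag k d c i j| ≤ 2 * E := by
  have hentry : ∀ j ∈ Finset.univ.erase i, |symmTridiag k d c i j| ≤
      (if (j : ℕ) = i + 1 then E else 0) + (if (i : ℕ) = j + 1 then E else 0) := by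
    intro j hj
    have hij : i ≠ j := (Finset.ne_of_mem_erase hj).symm
    simp only [symmTridiag, of_apply, if_neg hij]
    split_ifs <;> first
      | omega
      | linarith [hc _ i.cast_add_one_mem_Icc, hc _ j.cast_add_one_mem_Icc]
      | simp
  calc ∑ j ∈ Finset.univ.erase i, |symmTridiag k d c i j|
      ≤ ∑ j ∈ Finset.univ.erase i,
          ((if (j : ℕ) = i + 1 then E else 0) + (if (i : ℕ) = j + 1 then E else 0)) :=
        Finset.sum_le_sum hentry
    _ ≤ E + E := by
        rw [Finset.sum_add_distrib]
        gcongr <;> refine Finset.sum_ite_le_of_subsingleton _ (fun x y hx hy => ?_) hE <;>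
          exact Fin.ext (by omega)
    _ = 2 * E := by ring

theorem symmTridiag_eigenvalue_le {D E μ : ℝ} (hd : ∀ m ∈ Set.Icc (1 : ℝ) k, d m ≤ D)
    (hc : ∀ m ∈ Set.Icc (1 : ℝ) k, |c m| ≤ E)
    (hμ : ∃ v : Fin k → ℝ, v ≠ 0 ∧ symmTridiag k d c *ᵥ v = μ • v) : μ ≤ D + 2 * E := by
  obtain ⟨v, hv, hAv⟩ := hμ
  obtain ⟨i, hi⟩ := exists_le_diag_add_sum_abs_of_eigenvector hv hAv
  have hE : 0 ≤ E := (abs_nonneg _).trans (hc _ i.cast_add_one_mem_Icc)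
  rw [symmTridiag_apply_self] at hi
  linarith [hd _ i.cast_add_one_mem_Icc, sum_abs_symmTridiag_erase_le (d := d) hE hc i]

end symmTridiag

def rossiDiag (k t m : ℝ) : ℝ :=
  4 * m * (k - m) + t ^ 2 * (2 * m - 1) * (2 * k + 1 - 2 * m)

noncomputable def rossiOffDiag (k t m : ℝ) : ℝ :=
  |t| * √(4 * m * (2 * m + 1) * (k - m) * (2 * k - 1 - 2 * m))

section rossi

variable {k t m : ℝ}

theorem sq_le_rossiDiag_half (hk : 1 ≤ k) : k ^ 2 ≤ rossiDiag k t (k / 2) := by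
  have hcorrection : 0 ≤ t ^ 2 * (k ^ 2 - 1) := mul_nonneg (sq_nonneg t) (by nlinarith)
  unfold rossiDiag
  nlinarith

theorem rossiDiag_le (ht : |t| ≤ 1) (hm : 1 ≤ m) (hmk : m ≤ k) :
    rossiDiag k t m ≤ 2 * k ^ 2 := by
  have ht2 : t ^ 2 ≤ 1 := by rw [← sq_abs]; exact pow_le_one₀ (abs_nonneg t) ht
  have hprod : 0 ≤ (2 * m - 1) * (2 * k + 1 - 2 * m) := mul_nonneg (by linarith) (by linarith)
  calc rossiDiag k t m = 4 * m * (k - m) + t ^ 2 * ((2 * m - 1) * (2 * k + 1 - 2 * m)) := by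
        unfold rossiDiag; ring
    _ ≤ 4 * m * (k - m) + (2 * m - 1) * (2 * k + 1 - 2 * m) := by
        linarith [mul_le_of_le_one_left hprod ht2]
    _ ≤ k ^ 2 + k ^ 2 := by
        gcongr <;> nlinarith [sq_nonneg (2 * m - k), sq_nonneg (2 * m - k - 1)]
    _ = 2 * k ^ 2 := by ring

theorem abs_rossiOffDiag_le (ht : |t| ≤ 1) (hm : 1 ≤ m) (hmk : m ≤ k) :
    |rossiOffDiag k t m| ≤ k ^ 2 := by
  -- AM-GM on each of the two factors of the radicand
  have hX : 2 * m * (2 * k - 1 - 2 * m) ≤ (k - 1 / 2) ^ 2 := by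
    nlinarith [sq_nonneg (4 * m - 2 * k + 1)]
  have hY : (2 * m + 1) * (2 * (k - m)) ≤ (k + 1 / 2) ^ 2 := by
    nlinarith [sq_nonneg (4 * m - 2 * k + 1)]
  have hY0 : 0 ≤ (2 * m + 1) * (2 * (k - m)) := mul_nonneg (by linarith) (by linarith)
  have hradicand : 4 * m * (2 * m + 1) * (k - m) * (2 * k - 1 - 2 * m) ≤ (k ^ 2) ^ 2 :=
    calc 4 * m * (2 * m + 1) * (k - m) * (2 * k - 1 - 2 * m)
        = (2 * m * (2 * k - 1 - 2 * m)) * ((2 * m + 1) * (2 * (k - m))) := by ring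
      _ ≤ (k - 1 / 2) ^ 2 * (k + 1 / 2) ^ 2 :=
        mul_le_mul hX hY hY0 (sq_nonneg _)
      _ ≤ (k ^ 2) ^ 2 := by nlinarith
  have hsqrt := (Real.sqrt_le_left (sq_nonneg k)).2 hradicand
  rw [rossiOffDiag, abs_of_nonneg (by positivity)]
  exact (mul_le_of_le_one_left (Real.sqrt_nonneg _) ht).trans hsqrt

end rossi

/-- For even `k ≥ 2` and real `|t| < 1`, the maximum eigenvalue `lam` of the real
symmetric tridiagonal matrix `B` (diagonal `d_j = 4j(k−j) + t²(2j−1)(2k+1−2j)`,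
off-diagonal `c_j = |t|·√(4j(2j+1)(k−j)(2k−1−2j))`) satisfies
`k² ≤ lam ≤ C·k²` for a constant `C` independent of `k` and `t`,
i.e. `lam = Θ(k²)`. -/
theorem stmt19 :
    ∃ C : ℝ, 0 < C ∧ ∀ (k : ℕ), 2 ≤ k → Even k → ∀ (t : ℝ), |t| < 1 →
      ∀ (lam : ℝ),
        IsGreatest { μ : ℝ | ∃ v : Fin k → ℝ, v ≠ 0 ∧
          (Matrix.of (fun i j : Fin k =>
            if i = j then
              4 * ((i : ℕ) + 1 : ℝ) * ((k : ℝ) - ((i : ℕ) + 1))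
                + t ^ 2 * (2 * ((i : ℕ) + 1 : ℝ) - 1) * (2 * (k : ℝ) + 1 - 2 * ((i : ℕ) + 1))
            else if (j : ℕ) = (i : ℕ) + 1 then
              |t| * Real.sqrt (4 * ((i : ℕ) + 1 : ℝ) * (2 * ((i : ℕ) + 1) + 1)
                * ((k : ℝ) - ((i : ℕ) + 1)) * (2 * (k : ℝ) - 1 - 2 * ((i : ℕ) + 1)))
            else if (i : ℕ) = (j : ℕ) + 1 then
              |t| * Real.sqrt (4 * ((j : ℕ) + 1 : ℝ) * (2 * ((j : ℕ) + 1) + 1)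
                * ((k : ℝ) - ((j : ℕ) + 1)) * (2 * (k : ℝ) - 1 - 2 * ((j : ℕ) + 1)))
            else 0)).mulVec v = μ • v } lam →
        (k : ℝ) ^ 2 ≤ lam ∧ lam ≤ C * (k : ℝ) ^ 2 := by
  refine ⟨4, by norm_num, fun k hk hkeven t ht lam hlam => ?_⟩
  change IsGreatest {μ | ∃ v, v ≠ 0 ∧
    symmTridiag k (rossiDiag k t) (rossiOffDiag k t) *ᵥ v = μ • v} lam at hlam
  obtain ⟨half, hhalf⟩ : ∃ i : Fin k, ((i : ℕ) : ℝ) + 1 = k / 2 := by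
    obtain ⟨r, rfl⟩ := hkeven
    exact ⟨⟨r - 1, by omega⟩, by push_cast [Nat.cast_sub (by omega : 1 ≤ r)]; ring⟩
  constructor
  · calc (k : ℝ) ^ 2 ≤ rossiDiag k t (k / 2) :=
          sq_le_rossiDiag_half (by exact_mod_cast (by omega : 1 ≤ k))
      _ = symmTridiag k (rossiDiag k t) (rossiOffDiag k t) half half := by
        rw [symmTridiag_apply_self, hhalf]
      _ ≤ lam := symmTridiag_isHermitian.diag_le_of_mem_upperBounds hlam.2 half
  · have := symmTridiag_eigenvalue_le (fun m hm => rossiDiag_le ht.le hm.1 hm.2)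
      (fun m hm => abs_rossiOffDiag_le ht.le hm.1 hm.2) hlam.1
    linarith
end
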